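/- Let T, p be positive integers, φ_1, ..., φ_T ∈ ℝ^p, δ ∈ (0, 1), S ≥ 0. Set Z_0 = I_p, and let Δ̂_t, Δ_t be real numbers satisfying |Δ_t| ≤ 1/2, Δ̂_t ≥ 0 and 0 ≤ Δ̂_t − Δ_t ≤ B_t, where γ_t = √(log det Z_t + 2 log(1/δ)) + S, B_t = 2 γ_{t-1} ‖φ_t‖_{Z_{t-1}⁻¹}, I_t = 1{Δ̂_t ≤ B_t}, and Z_t = Z_{t-1} + I_t φ_t φ_tᵀ for t = 1, ..., T. Then for every ε ∈ (0, 1/2), 2 Σ_{t=1}^T I_t |Δ_t| ≤ 2ε · #{t ∈ [T] : |Δ_t| ≤ ε} + (16/ε) · (log det Z_T + 2 log(1/δ) + S² + 1/16) · log det Z_T. -/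

import Mathlib

/-!
On a queried round with margin `|Δ_t| > ε`, optimism gives `|Δ_t| ≤ min (1/2) B_t`, hence
`|Δ_t| ≤ |Δ_t|² / ε ≤ min (1/4) (4 γ_t² w_t) / ε ≤ (4 γ_t² + 1/4) log (1 + w_t) / ε`, where
`w_t = ‖φ_t‖²_{Z_t⁻¹}`. By the matrix determinant lemma the terms `log (1 + I_t w_t)` telescope to
`log det Z_T` (the elliptical potential), and `γ_t² ≤ 2 (log det Z_T + 2 log (1/δ) + S²)` since
`log det Z_t` is nondecreasing. Rounds with `|Δ_t| ≤ ε` cost at most `ε` each.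
-/

open Matrix Finset

namespace Matrix

variable {n : Type*} [Fintype n]

theorem det_add_vecMulVec [DecidableEq n] {A : Matrix n n ℝ} (hA : IsUnit A.det)
    (u v : n → ℝ) : (A + vecMulVec u v).det = A.det * (1 + v ⬝ᵥ A⁻¹ *ᵥ u) := by
  have hfactor : A + vecMulVec u v = A * (1 + vecMulVec (A⁻¹ *ᵥ u) v) := by
    rw [mul_add, mul_one, mul_vecMulVec, mulVec_mulVec, mul_nonsing_inv A hA, one_mulVec]
  rw [hfactor, det_mul, vecMulVec_eq Unit, det_one_add_replicateCol_mul_replicateRow]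

theorem PosDef.add_smul_vecMulVec_self {A : Matrix n n ℝ} (hA : A.PosDef) {c : ℝ}
    (hc : 0 ≤ c) (u : n → ℝ) : (A + c • vecMulVec u u).PosDef := by
  refine hA.add_posSemidef ?_
  simpa using (posSemidef_vecMulVec_self_star u).smul hc

theorem PosDef.dotProduct_inv_mulVec_nonneg [DecidableEq n] {A : Matrix n n ℝ}
    (hA : A.PosDef) (u : n → ℝ) : 0 ≤ u ⬝ᵥ A⁻¹ *ᵥ u := by
  simpa using hA.inv.posSemidef.dotProduct_mulVec_nonneg u

theorem PosDef.log_det_add_smul_vecMulVec_self [DecidableEq n] {A : Matrix n n ℝ}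
    (hA : A.PosDef) {c : ℝ} (hc : 0 ≤ c) (u : n → ℝ) :
    Real.log (A + c • vecMulVec u u).det =
      Real.log A.det + Real.log (1 + c * (u ⬝ᵥ A⁻¹ *ᵥ u)) := by
  have hquad : 0 ≤ c * (u ⬝ᵥ A⁻¹ *ᵥ u) := mul_nonneg hc (hA.dotProduct_inv_mulVec_nonneg u)
  rw [← smul_vecMulVec, det_add_vecMulVec hA.det_pos.ne'.isUnit, mulVec_smul, dotProduct_smul,
    smul_eq_mul, Real.log_mul hA.det_pos.ne' (by positivity)]

end Matrix

section RankOneUpdates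

variable {n : Type*} [Fintype n] {Z : ℕ → Matrix n n ℝ} {φ : ℕ → n → ℝ} {c : ℕ → ℝ} {T : ℕ}

theorem posDef_of_rankOne_updates (h0 : (Z 0).PosDef) (hc : ∀ t < T, 0 ≤ c t)
    (hZ : ∀ t < T, Z (t + 1) = Z t + c t • vecMulVec (φ t) (φ t)) :
    ∀ t ≤ T, (Z t).PosDef
  | 0, _ => h0
  | t + 1, ht => by
    rw [hZ t ht]
    exact (posDef_of_rankOne_updates h0 hc hZ t (Nat.le_of_succ_le ht)).add_smul_vecMulVec_self
      (hc t ht) _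

theorem log_one_add_nonneg_of_rankOne_updates [DecidableEq n] (h0 : (Z 0).PosDef)
    (hc : ∀ t < T, 0 ≤ c t) (hZ : ∀ t < T, Z (t + 1) = Z t + c t • vecMulVec (φ t) (φ t))
    {t : ℕ} (ht : t < T) : 0 ≤ Real.log (1 + c t * (φ t ⬝ᵥ (Z t)⁻¹ *ᵥ φ t)) :=
  Real.log_nonneg <| le_add_of_nonneg_right <| mul_nonneg (hc t ht) <|
    (posDef_of_rankOne_updates h0 hc hZ t ht.le).dotProduct_inv_mulVec_nonneg (φ t)

theorem log_det_eq_of_rankOne_updates [DecidableEq n] (h0 : (Z 0).PosDef)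
    (hc : ∀ t < T, 0 ≤ c t) (hZ : ∀ t < T, Z (t + 1) = Z t + c t • vecMulVec (φ t) (φ t)) :
    ∀ t ≤ T, Real.log (Z t).det =
      Real.log (Z 0).det + ∑ s ∈ range t, Real.log (1 + c s * (φ s ⬝ᵥ (Z s)⁻¹ *ᵥ φ s))
  | 0, _ => by simp
  | t + 1, ht => by
    have hPD := posDef_of_rankOne_updates h0 hc hZ t (Nat.le_of_succ_le ht)
    rw [hZ t ht, sum_range_succ, ← add_assoc,
      ← log_det_eq_of_rankOne_updates h0 hc hZ t (Nat.le_of_succ_le ht),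
      hPD.log_det_add_smul_vecMulVec_self (hc t ht)]

theorem log_det_le_log_det_of_rankOne_updates [DecidableEq n] (h0 : (Z 0).PosDef)
    (hc : ∀ t < T, 0 ≤ c t) (hZ : ∀ t < T, Z (t + 1) = Z t + c t • vecMulVec (φ t) (φ t))
    {s t : ℕ} (hst : s ≤ t) (ht : t ≤ T) : Real.log (Z s).det ≤ Real.log (Z t).det := by
  rw [log_det_eq_of_rankOne_updates h0 hc hZ s (hst.trans ht),
    log_det_eq_of_rankOne_updates h0 hc hZ t ht]
  refine add_le_add_right (sum_le_sum_of_subset_of_nonneg (range_subset_range.2 hst)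
    fun r hr _ => ?_) _
  exact log_one_add_nonneg_of_rankOne_updates h0 hc hZ ((mem_range.1 hr).trans_le ht)

end RankOneUpdates

theorem le_mul_log_one_add {x c w : ℝ} (hc : 0 ≤ c) (hw : 0 ≤ w) (hx : x ≤ 1 / 4)
    (hxw : x ≤ c * w) : x ≤ (c + 1 / 4) * Real.log (1 + w) := by
  have hpos : 0 < 1 + w := by linarith
  have hratio : x ≤ (c + 1 / 4) * (1 - (1 + w)⁻¹) := by
    rw [show 1 - (1 + w)⁻¹ = w / (1 + w) by field_simp; ring, ← mul_div_assoc,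
      le_div_iff₀ hpos]
    nlinarith
  exact hratio.trans (by gcongr; exact Real.one_sub_inv_le_log_of_pos hpos)

theorem le_div_mul_log_one_add {ε x γ w : ℝ} (hε : 0 < ε) (hεx : ε < x) (hx : x ≤ 1 / 2)
    (hw : 0 ≤ w) (hxB : x ≤ 2 * γ * √w) :
    x ≤ (4 * γ ^ 2 + 1 / 4) / ε * Real.log (1 + w) := by
  have hx0 : 0 < x := hε.trans hεx
  have hsq_quarter : x ^ 2 ≤ 1 / 4 := by nlinarith
  have hsq_B : x ^ 2 ≤ 4 * γ ^ 2 * w :=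
    calc x ^ 2 ≤ (2 * γ * √w) ^ 2 := pow_le_pow_left₀ hx0.le hxB 2
      _ = 4 * γ ^ 2 * w := by rw [mul_pow, mul_pow, Real.sq_sqrt hw]; ring
  calc x ≤ x ^ 2 / ε := by rw [le_div_iff₀ hε]; nlinarith
    _ ≤ (4 * γ ^ 2 + 1 / 4) * Real.log (1 + w) / ε := by
      gcongr; exact le_mul_log_one_add (by positivity) hw hsq_quarter hsq_B
    _ = (4 * γ ^ 2 + 1 / 4) / ε * Real.log (1 + w) := by ring

theorem ite_mul_abs_le_div_mul_log_one_add {ε γ w B C Δhat Δ : ℝ} (hε : 0 < ε) (hw : 0 ≤ w)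
    (hB : B = 2 * γ * √w) (hC : 4 * γ ^ 2 + 1 / 4 ≤ C) (hΔ : |Δ| ≤ 1 / 2) (hΔhat : 0 ≤ Δhat)
    (hl : 0 ≤ Δhat - Δ) (hu : Δhat - Δ ≤ B) (hεΔ : ε < |Δ|) :
    (if Δhat ≤ B then (1 : ℝ) else 0) * |Δ| ≤
      C / ε * Real.log (1 + (if Δhat ≤ B then (1 : ℝ) else 0) * w) := by
  split_ifs with hquery
  · have hΔB : |Δ| ≤ B := abs_le.2 ⟨by linarith, by linarith⟩
    simp only [one_mul]
    calc |Δ| ≤ (4 * γ ^ 2 + 1 / 4) / ε * Real.log (1 + w) :=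
          le_div_mul_log_one_add hε hεΔ hΔ hw (hB ▸ hΔB)
      _ ≤ C / ε * Real.log (1 + w) := by
          gcongr; exact Real.log_nonneg (by linarith)
  · simp

theorem sum_le_mul_card_filter_add_mul_sum {ι : Type*} {s : Finset ι} {f g a : ι → ℝ}
    {ε K : ℝ} (hK : 0 ≤ K) (hg : ∀ t ∈ s, 0 ≤ g t) (hsmall : ∀ t ∈ s, a t ≤ ε → f t ≤ ε)
    (hbig : ∀ t ∈ s, ε < a t → f t ≤ K * g t) :
    ∑ t ∈ s, f t ≤ ε * #{t ∈ s | a t ≤ ε} + K * ∑ t ∈ s, g t := by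
  rw [← sum_filter_add_sum_filter_not s (fun t => a t ≤ ε)]
  refine add_le_add ?_ ?_
  · rw [mul_comm, ← nsmul_eq_mul]
    refine sum_le_card_nsmul _ _ _ fun t ht => ?_
    rw [mem_filter] at ht
    exact hsmall t ht.1 ht.2
  · calc ∑ t ∈ s with ¬a t ≤ ε, f t ≤ ∑ t ∈ s with ¬a t ≤ ε, K * g t :=
          sum_le_sum fun t ht => by
            rw [mem_filter, not_le] at ht
            exact hbig t ht.1 ht.2
      _ ≤ K * ∑ t ∈ s, g t := by
          rw [← mul_sum]
          exact mul_le_mul_of_nonneg_left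
            (sum_le_sum_of_subset_of_nonneg (filter_subset _ _) fun t ht _ => hg t ht) hK

theorem stmt_11_general (T p : ℕ)
    (φ : ℕ → Fin p → ℝ) (δ S : ℝ) (hδ : δ ∈ Set.Ioo (0 : ℝ) 1)
    (Z : ℕ → Matrix (Fin p) (Fin p) ℝ) (hZ0 : Z 0 = 1)
    (γ B I : ℕ → ℝ) (Δhat Δ : ℕ → ℝ)
    (hγ : ∀ t < T, γ t = Real.sqrt (Real.log (Z t).det + 2 * Real.log (1 / δ)) + S)
    (hB : ∀ t < T, B t = 2 * γ t * Real.sqrt (φ t ⬝ᵥ (Z t)⁻¹ *ᵥ φ t))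
    (hI : ∀ t < T, I t = if Δhat t ≤ B t then (1 : ℝ) else 0)
    (hZ : ∀ t < T, Z (t + 1) = Z t + I t • vecMulVec (φ t) (φ t))
    (hΔbd : ∀ t < T, |Δ t| ≤ 1 / 2)
    (hΔhat : ∀ t < T, 0 ≤ Δhat t)
    (hΔl : ∀ t < T, 0 ≤ Δhat t - Δ t)
    (hΔu : ∀ t < T, Δhat t - Δ t ≤ B t)
    (ε : ℝ) (hε : 0 < ε) :
    2 * ∑ t ∈ Finset.range T, I t * |Δ t| ≤
      2 * ε * ((Finset.range T).filter (fun t => |Δ t| ≤ ε)).card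
        + (16 / ε) * (Real.log (Z T).det + 2 * Real.log (1 / δ) + S ^ 2 + 1 / 16)
            * Real.log (Z T).det := by
  set L := Real.log (Z T).det + 2 * Real.log (1 / δ)
  have hlogδ : 0 ≤ Real.log (1 / δ) := Real.log_nonneg ((one_le_div hδ.1).2 hδ.2.le)
  have hI_nonneg : ∀ t < T, 0 ≤ I t := fun t ht => by rw [hI t ht]; split_ifs <;> norm_num
  have h0 : (Z 0).PosDef := hZ0 ▸ PosDef.one
  have hlogdet_bounds :
      ∀ t ≤ T, 0 ≤ Real.log (Z t).det ∧ Real.log (Z t).det ≤ Real.log (Z T).det :=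
    fun t ht => ⟨by simpa [hZ0] using
        log_det_le_log_det_of_rankOne_updates h0 hI_nonneg hZ (Nat.zero_le t) ht,
      log_det_le_log_det_of_rankOne_updates h0 hI_nonneg hZ ht le_rfl⟩
  have hL : 0 ≤ L := by linarith [hlogdet_bounds T le_rfl]
  have hγ_sq : ∀ t < T, 4 * γ t ^ 2 + 1 / 4 ≤ 8 * (L + S ^ 2 + 1 / 16) := fun t ht => by
    have hsq := add_sq_le (a := √(Real.log (Z t).det + 2 * Real.log (1 / δ))) (b := S)
    rw [Real.sq_sqrt (by linarith [hlogdet_bounds t ht.le]), ← hγ t ht] at hsq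
    linarith [hlogdet_bounds t ht.le]
  have hsplit := sum_le_mul_card_filter_add_mul_sum (s := range T)
    (f := fun t => I t * |Δ t|) (a := fun t => |Δ t|) (ε := ε)
    (K := 8 * (L + S ^ 2 + 1 / 16) / ε) (by positivity)
    (fun t ht => log_one_add_nonneg_of_rankOne_updates h0 hI_nonneg hZ (mem_range.1 ht))
    (fun t ht hsmall => by rw [hI t (mem_range.1 ht)]; split_ifs <;> linarith)
    (fun t ht hbig => by
      rw [mem_range] at ht
      rw [hI t ht]
      exact ite_mul_abs_le_div_mul_log_one_add hε
        ((posDef_of_rankOne_updates h0 hI_nonneg hZ t ht.le).dotProduct_inv_mulVec_nonneg _)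
        (hB t ht) (hγ_sq t ht) (hΔbd t ht) (hΔhat t ht) (hΔl t ht) (hΔu t ht) hbig)
  have hlogdetT := log_det_eq_of_rankOne_updates h0 hI_nonneg hZ T le_rfl
  rw [hZ0, det_one, Real.log_one, zero_add] at hlogdetT
  rw [← hlogdetT] at hsplit
  linear_combination 2 * hsplit

/-- Cumulative-regret bound over queried rounds for the frozen-NTK selective
sampler. Rounds are indexed `0, ..., T-1`; `Z t` is the covariance matrix
before round `t` (`Z 0 = I`), and `γ, B, I, Z` are defined by the mutual
recursion of the algorithm. -/
theorem stmt_11 (T p : ℕ) (hT : 0 < T) (hp : 0 < p)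
    (φ : ℕ → Fin p → ℝ) (δ S : ℝ) (hδ : δ ∈ Set.Ioo (0 : ℝ) 1) (hS : 0 ≤ S)
    (Z : ℕ → Matrix (Fin p) (Fin p) ℝ) (hZ0 : Z 0 = 1)
    (γ B I : ℕ → ℝ) (Δhat Δ : ℕ → ℝ)
    (hγ : ∀ t < T, γ t = Real.sqrt (Real.log (Z t).det + 2 * Real.log (1 / δ)) + S)
    (hB : ∀ t < T, B t = 2 * γ t * Real.sqrt (φ t ⬝ᵥ (Z t)⁻¹ *ᵥ φ t))
    (hI : ∀ t < T, I t = if Δhat t ≤ B t then (1 : ℝ) else 0)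
    (hZ : ∀ t < T, Z (t + 1) = Z t + I t • vecMulVec (φ t) (φ t))
    (hΔbd : ∀ t < T, |Δ t| ≤ 1 / 2)
    (hΔhat : ∀ t < T, 0 ≤ Δhat t)
    (hΔl : ∀ t < T, 0 ≤ Δhat t - Δ t)
    (hΔu : ∀ t < T, Δhat t - Δ t ≤ B t)
    (ε : ℝ) (hε : 0 < ε) (hε' : ε < 1 / 2) :
    2 * ∑ t ∈ Finset.range T, I t * |Δ t| ≤
      2 * ε * ((Finset.range T).filter (fun t => |Δ t| ≤ ε)).card
        + (16 / ε) * (Real.log (Z T).det + 2 * Real.log (1 / δ) + S ^ 2 + 1 / 16)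
            * Real.log (Z T).det :=
  stmt_11_general T p φ δ S hδ Z hZ0 γ B I Δhat Δ hγ hB hI hZ hΔbd hΔhat hΔl hΔu ε hε
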